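/- For integers 0 < n < L and α, β ∈ (0,1] with α ≠ β, the partition function decomposes as Z^{α,β}(L,n) = (αβ/(α−β)) · (R(L,n,β) − R(L,n,α)), where R(L,n,x) = Σ_{k=0}^{L−n} C^{L+n−1}_{L−n−k} · x^{−(k+1)}. -/

import Mathlib

open scoped BigOperators Classical
open Filter Topology

noncomputable section

namespace TASEP

/-- The matrix `X₀`: ones on the diagonal and the subdiagonal. -/
def X0 : ℕ → ℕ → ℝ := fun i k => if k = i ∨ k + 1 = i then 1 else 0

/-- The matrix `X₁`: ones on the diagonal and the superdiagonal. -/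
def X1 : ℕ → ℕ → ℝ := fun i k => if k = i ∨ k = i + 1 then 1 else 0

/-- The matrix `X₂`: a single one in the `(0,0)` entry. -/
def X2 : ℕ → ℕ → ℝ := fun i k => if i = 0 ∧ k = 0 then 1 else 0

/-- The matrix associated to a species label (`0` = hole, `1` = first class
particle, `2` = second class particle). -/
def Xmat : Fin 3 → ℕ → ℕ → ℝ
  | 0 => X0
  | 1 => X1
  | 2 => X2

/-- Product of two infinite matrices (well defined here since the relevant
matrices have finitely many nonzero entries in each row and column). -/
def mul (A B : ℕ → ℕ → ℝ) : ℕ → ℕ → ℝ := fun i k => ∑' j, A i j * B j k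

/-- The row vector `⟨W_α|`, with `i`-th entry `((1-α)/α)^i`. -/
def W (α : ℝ) : ℕ → ℝ := fun i => ((1 - α) / α) ^ i

/-- The column vector `|V_β⟩`, with `i`-th entry `((1-β)/β)^i`. -/
def V (β : ℝ) : ℕ → ℝ := fun i => ((1 - β) / β) ^ i

/-- Row vector times matrix. -/
def rowMul (v : ℕ → ℝ) (A : ℕ → ℕ → ℝ) : ℕ → ℝ := fun k => ∑' i, v i * A i k

/-- Matrix times column vector. -/
def colMul (A : ℕ → ℕ → ℝ) (v : ℕ → ℝ) : ℕ → ℝ := fun i => ∑' k, A i k * v k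

/-- Row vector times a word of matrices. -/
def rowWord (v : ℕ → ℝ) : List (Fin 3) → ℕ → ℝ
  | [] => v
  | a :: rest => rowWord (rowMul v (Xmat a)) rest

/-- Matrix element `⟨v| X_{σ₁} ⋯ X_{σ_p} |w⟩` of a word of matrices. -/
def pairing (v : ℕ → ℝ) (word : List (Fin 3)) (w : ℕ → ℝ) : ℝ :=
  ∑' i, rowWord v word i * w i

/-- Weight `w^{α,β}(τ) = ⟨W_α| X_{τ₁} ⋯ X_{τ_L} |V_β⟩` of a configuration. -/
def wt (α β : ℝ) {L : ℕ} (τ : Fin L → Fin 3) : ℝ :=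
  pairing (W α) (List.ofFn τ) (V β)

/-- Number of second class particles in a configuration. -/
def numTwos {L : ℕ} (τ : Fin L → Fin 3) : ℕ :=
  (Finset.univ.filter fun i => τ i = 2).card

/-- `Y L n`: configurations of length `L` with exactly `n` second class particles. -/
def Y (L n : ℕ) : Finset (Fin L → Fin 3) :=
  Finset.univ.filter fun τ => numTwos τ = n

/-- The partition function `Z^{α,β}(L,n)`. -/
def Z (α β : ℝ) (L n : ℕ) : ℝ := ∑ τ ∈ Y L n, wt α β τ

/-- Value of a configuration at the 1-based site `s` (defaulting to `0` off the lattice). -/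
def val {L : ℕ} (τ : Fin L → Fin 3) (s : ℕ) : Fin 3 :=
  if h : 1 ≤ s ∧ s ≤ L then τ ⟨s - 1, by omega⟩ else 0

/-- `E α β L n r sites j` is `E_r(L,n;i₁,…,i_r;j)`: the sum of weights of
configurations in `Y L n` with a first class particle at each of the sites
`i₁,…,i_{r-1}` and a block of `j` consecutive first class particles starting
at site `i_r`. -/
def E (α β : ℝ) (L n r : ℕ) (sites : Fin r → ℕ) (j : ℕ) : ℝ :=
  ∑ τ ∈ (Y L n).filter (fun τ =>
      (∀ m : Fin r, (m : ℕ) + 1 ≠ r → val τ (sites m) = 1) ∧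
      (∀ m : Fin r, (m : ℕ) + 1 = r → ∀ t ∈ Finset.range j, val τ (sites m + t) = 1)),
    wt α β τ

end TASEP

namespace TASEP

/-- The Catalan triangle numbers `C^m_n = binom(m+n,n)·(m−n+1)/(m+1)`. -/
def catC (m n : ℕ) : ℝ := ((m + n).choose n : ℝ) * ((m : ℝ) - (n : ℝ) + 1) / ((m : ℝ) + 1)

/-- The constants `c_{j,k}`: `c_{j,k} = C^{k−1}_{k−j}` for `j ≥ 1` and
`c_{0,k} = δ_{k,0}`. -/
def cCoeff (j k : ℕ) : ℝ :=
  if j = 0 then (if k = 0 then 1 else 0) else catC (k - 1) (k - j)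

/-- The constants `d_{m,j,k}`: for `j ≤ m`,
`d_{m,j,k} = binom(m−j+k,k) − binom(m−j+k,k−j)` (the second binomial taken to
be `0` when `k < j`), and `d_{m,m+1,k} = δ_{k,0}`. -/
def dCoeff (m j k : ℕ) : ℝ :=
  if j ≤ m then
    ((m - j + k).choose k : ℝ) - (if j ≤ k then ((m - j + k).choose (k - j) : ℝ) else 0)
  else if k = 0 then 1 else 0

end TASEP

namespace TASEP

/-- `R(L,n,x) = Σ_{k=0}^{L−n} C^{L+n−1}_{L−n−k} x^{−(k+1)}`. -/
def R (L n : ℕ) (x : ℝ) : ℝ :=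
  ∑ k ∈ Finset.range (L - n + 1), catC (L + n - 1) (L - n - k) * (x ^ (k + 1))⁻¹

end TASEP

/-!
Since `X₂ = |e₀⟩⟨e₀|`, the weight of a configuration factorises at its second class particles.
Summing over the words in `{0,1}` between them, `Z^{α,β}(L,n)` becomes a convolution of
`⟨W_α|T^p|e₀⟩`, `n - 1` factors `⟨e₀|T^p|e₀⟩` and `⟨e₀|T^p|V_β⟩`, where `T = X₀ + X₁`.
The relation `X₁X₀ = X₀ + X₁` and `⟨W_x|X₀ = x⁻¹⟨W_x|` give
`⟨W_x|T^m|e₀⟩ = ∑_{e+j=m} B(e,j) x^{-j}` with the ballot numbers `B(e,s) = C^{e+s}_e`; as `T` is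
symmetric and `V_β = W_β`, the same formula computes `⟨e₀|T^m|V_β⟩`. The ballot numbers satisfy
`∑_{p+q=N} B(p,r) B(q,s) = B(N, r+s+1)` (concatenation of paths), which collapses the convolution
to `∑_k C^{L+n-1}_{L-n-k} ∑_{i+j=k} α^{-i} β^{-j}`, and `(α⁻¹ - β⁻¹) ∑_{i+j=k} α^{-i} β^{-j}` is
`α^{-(k+1)} - β^{-(k+1)}`.
-/

open Finset

namespace Finset.Nat

theorem sum_antidiagonal_interchange {M : Type*} [AddCommMonoid M] (f : ℕ)
    (g : ℕ → ℕ → ℕ → ℕ → M) :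
    ∑ p ∈ antidiagonal f, ∑ u ∈ antidiagonal p.1, ∑ w ∈ antidiagonal p.2,
        g u.1 u.2 w.1 w.2 =
      ∑ p ∈ antidiagonal f, ∑ u ∈ antidiagonal p.1, ∑ w ∈ antidiagonal p.2,
        g u.1 w.1 u.2 w.2 := by
  simp_rw [← sum_product']
  rw [sum_sigma', sum_sigma']
  set S := (antidiagonal f).sigma fun p => antidiagonal p.1 ×ˢ antidiagonal p.2
  let φ : (_ : ℕ × ℕ) × (ℕ × ℕ) × (ℕ × ℕ) → (_ : ℕ × ℕ) × (ℕ × ℕ) × (ℕ × ℕ) :=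
    fun x => ⟨(x.2.1.1 + x.2.2.1, x.2.1.2 + x.2.2.2), (x.2.1.1, x.2.2.1), (x.2.1.2, x.2.2.2)⟩
  have hφ : ∀ x ∈ S, φ x ∈ S ∧ φ (φ x) = x := by
    rintro ⟨⟨p, q⟩, ⟨a, b⟩, c, d⟩ hx
    simp only [S, mem_sigma, mem_product, HasAntidiagonal.mem_antidiagonal] at hx
    obtain ⟨h, rfl, rfl⟩ := hx
    refine ⟨?_, rfl⟩
    simp only [S, φ, mem_sigma, mem_product, HasAntidiagonal.mem_antidiagonal, and_true]
    omega
  exact sum_nbij' φ φ (fun x hx => (hφ x hx).1) (fun x hx => (hφ x hx).1)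
    (fun x hx => (hφ x hx).2) (fun x hx => (hφ x hx).2) (fun x _ => rfl)

end Finset.Nat

namespace TASEP

/-! ### Ballot numbers -/

/-- `ballot e s = C^{e+s}_e` (`ballot_eq_catC`); indexing by `e` and `s` keeps `catC m n` inside
its meaningful range `n ≤ m`. -/
def ballot : ℕ → ℕ → ℕ
  | 0, _ => 1
  | e + 1, 0 => ballot e 1
  | e + 1, s + 1 => ballot (e + 1) s + ballot e (s + 2)

@[simp] theorem ballot_zero_left (s : ℕ) : ballot 0 s = 1 := by rw [ballot]
theorem ballot_succ_zero (e : ℕ) : ballot (e + 1) 0 = ballot e 1 := by rw [ballot]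
theorem ballot_succ_succ (e s : ℕ) :
    ballot (e + 1) (s + 1) = ballot (e + 1) s + ballot e (s + 2) := by rw [ballot]

theorem ballot_eq_catC (e s : ℕ) : (ballot e s : ℝ) = catC (e + s) e := by
  induction e, s using ballot.induct with
  | case1 s =>
    have : (s : ℝ) + 1 ≠ 0 := by positivity
    simp [catC]
    field_simp
  | case2 e ih =>
    rw [ballot, ih, catC, catC, show e + 1 + 0 + (e + 1) = 2 * e + 1 + 1 by ring,
      show e + 1 + e = 2 * e + 1 by ring, Nat.choose_succ_succ', Nat.choose_symm_half]
    push_cast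
    field_simp
    ring
  | case3 e s ih1 ih2 =>
    rw [ballot, Nat.cast_add, ih1, ih2, catC, catC, catC]
    have hpascal := Nat.choose_succ_succ' (2 * e + s + 2) e
    have hright := Nat.choose_succ_right_eq (2 * e + s + 2) e
    rw [show e + 1 + (s + 1) + (e + 1) = 2 * e + s + 2 + 1 by ring,
      show e + 1 + s + (e + 1) = 2 * e + s + 2 by ring,
      show e + (s + 2) + e = 2 * e + s + 2 by ring, hpascal]
    rw [show 2 * e + s + 2 - e = e + s + 2 by omega] at hright
    have hright' : ((2 * e + s + 2).choose (e + 1) : ℝ) * (e + 1) =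
        ((2 * e + s + 2).choose e : ℝ) * (e + s + 2) := by exact_mod_cast hright
    push_cast
    field_simp
    linear_combination (-((e : ℝ) + s + 3)) * hright'

theorem sum_antidiagonal_ballot (m k : ℕ) :
    ∑ p ∈ antidiagonal m, ballot p.1 (k + p.2) = ballot m (k + 1) := by
  induction m generalizing k with
  | zero => simp
  | succ m ih =>
    rw [Nat.sum_antidiagonal_succ', ballot_succ_succ, ← ih (k + 1)]
    simp only [add_zero, add_assoc, add_comm 1]

theorem sum_antidiagonal_ballot_mul_ballot (N r s : ℕ) :
    ∑ p ∈ antidiagonal N, ballot p.1 r * ballot p.2 s = ballot N (r + s + 1) := by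
  induction N generalizing r with
  | zero => simp
  | succ N ihN =>
    induction r with
    | zero =>
      rw [Nat.sum_antidiagonal_succ]
      simp only [ballot_succ_zero, ihN, ballot_zero_left, one_mul]
      rw [zero_add, ballot_succ_succ, add_comm 1 s]
    | succ r ihr =>
      rw [Nat.sum_antidiagonal_succ]
      simp only [ballot_succ_succ, add_mul, sum_add_distrib, ihN, ballot_zero_left, one_mul]
      rw [Nat.sum_antidiagonal_succ] at ihr
      simp only [ballot_zero_left, one_mul] at ihr
      rw [← add_assoc, ihr, show r + 1 + s = r + s + 1 by ring,
        show r + 2 + s + 1 = r + s + 1 + 2 by ring]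

def ballotPoly (f s : ℕ) (y : ℝ) : ℝ :=
  ∑ p ∈ antidiagonal f, (ballot p.1 (s + p.2) : ℝ) * y ^ p.2

theorem ballotPoly_succ_succ (m k : ℕ) (y : ℝ) :
    ballotPoly (m + 1) (k + 1) y = ballotPoly (m + 1) k y + ballotPoly m (k + 2) y := by
  simp only [ballotPoly, Nat.sum_antidiagonal_succ, ballot_zero_left]
  rw [add_assoc, ← sum_add_distrib]
  congr 1
  refine sum_congr rfl fun p _ => ?_
  rw [show k + 1 + p.2 = k + p.2 + 1 by ring, ballot_succ_succ,
    show k + 2 + p.2 = k + p.2 + 2 by ring]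
  push_cast
  ring

theorem ballotPoly_succ (m s : ℕ) (y : ℝ) :
    ballotPoly (m + 1) s y = ballot (m + 1) s + y * ballotPoly m (s + 1) y := by
  simp only [ballotPoly, Nat.sum_antidiagonal_succ', mul_sum]
  simp only [add_zero, pow_zero, mul_one, pow_succ]
  congr 1
  refine sum_congr rfl fun p _ => ?_
  rw [show s + (p.2 + 1) = s + 1 + p.2 by ring]
  ring

theorem ballotPoly_succ_zero (m : ℕ) (y : ℝ) :
    ballotPoly (m + 1) 0 y = y * ballotPoly m 0 y + ballotPoly m 1 y := by
  cases m with
  | zero =>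
    simp [ballotPoly, Nat.sum_antidiagonal_succ, ballot_succ_zero]
  | succ m =>
    rw [ballotPoly_succ (m + 1) 0, ballot_succ_zero]
    linear_combination y * ballotPoly_succ_succ m 0 y - ballotPoly_succ m 1 y

theorem ballotPoly_one (m s : ℕ) : ballotPoly m s 1 = ballot m (s + 1) := by
  simp only [ballotPoly, one_pow, mul_one]
  exact_mod_cast sum_antidiagonal_ballot m s

theorem ballotPoly_zero (m s : ℕ) : ballotPoly m s 0 = ballot m s := by
  cases m with
  | zero => simp [ballotPoly]
  | succ m => simp [ballotPoly_succ]

theorem sum_antidiagonal_ballotPoly_mul (f r s : ℕ) (x y : ℝ) :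
    ∑ p ∈ antidiagonal f, ballotPoly p.1 r x * ballotPoly p.2 s y =
      ∑ q ∈ antidiagonal f,
        (ballot q.1 (r + s + 1 + q.2) : ℝ) * ∑ t ∈ antidiagonal q.2, x ^ t.1 * y ^ t.2 := by
  simp only [ballotPoly, sum_mul_sum]
  rw [Nat.sum_antidiagonal_interchange f
    (fun a i b j => (ballot a (r + i) : ℝ) * x ^ i * ((ballot b (s + j) : ℝ) * y ^ j))]
  refine sum_congr rfl fun q _ => ?_
  rw [sum_comm, mul_sum]
  refine sum_congr rfl fun t ht => ?_
  rw [HasAntidiagonal.mem_antidiagonal] at ht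
  have hconv := sum_antidiagonal_ballot_mul_ballot q.1 (r + t.1) (s + t.2)
  rw [show r + t.1 + (s + t.2) + 1 = r + s + 1 + q.2 by omega] at hconv
  rw [← hconv]
  push_cast
  rw [sum_mul]
  refine sum_congr rfl fun u _ => ?_
  ring

/-! ### Row vectors and the transfer matrix `X₀ + X₁` -/

theorem Xmat_eq_zero_of_far (a : Fin 3) {i k : ℕ} (h : k + 2 ≤ i ∨ i + 2 ≤ k) :
    Xmat a i k = 0 := by
  fin_cases a <;> simp [Xmat, X0, X1, X2] <;> omega

theorem rowMul_Xmat_eq_sum (v : ℕ → ℝ) (a : Fin 3) (k : ℕ) :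
    rowMul v (Xmat a) k = ∑ i ∈ range (k + 2), v i * Xmat a i k :=
  tsum_eq_sum fun i hi => by
    rw [Xmat_eq_zero_of_far a (.inl (by simpa using hi)), mul_zero]

def rowOp (a : Fin 3) : Module.End ℝ (ℕ → ℝ) where
  toFun v := rowMul v (Xmat a)
  map_add' u v := by
    ext k
    simp only [rowMul_Xmat_eq_sum, Pi.add_apply, add_mul, sum_add_distrib]
  map_smul' c v := by
    ext k
    simp only [rowMul_Xmat_eq_sum, Pi.smul_apply, smul_eq_mul, mul_sum, mul_assoc,
      RingHom.id_apply]

theorem rowOp_apply (a : Fin 3) (v : ℕ → ℝ) : rowOp a v = rowMul v (Xmat a) := rfl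

theorem rowOp_zero_apply (v : ℕ → ℝ) (k : ℕ) : rowOp 0 v k = v k + v (k + 1) := by
  rw [rowOp_apply, rowMul_Xmat_eq_sum, sum_range_succ, sum_range_succ, sum_eq_zero]
  · simp [Xmat, X0]
  · intro i hi
    simp only [mem_range] at hi
    simp [Xmat, X0]
    omega

theorem rowOp_one_apply_zero (v : ℕ → ℝ) : rowOp 1 v 0 = v 0 := by
  rw [rowOp_apply, rowMul_Xmat_eq_sum]
  simp [Xmat, X1]

theorem rowOp_one_apply_succ (v : ℕ → ℝ) (k : ℕ) : rowOp 1 v (k + 1) = v (k + 1) + v k := by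
  rw [rowOp_apply, rowMul_Xmat_eq_sum, sum_range_succ, sum_range_succ, sum_range_succ, sum_eq_zero]
  · simp [Xmat, X1]
    ring
  · intro i hi
    simp only [mem_range] at hi
    simp [Xmat, X1]
    omega

def e0 : ℕ → ℝ := Pi.single 0 1

theorem rowOp_two (v : ℕ → ℝ) : rowOp 2 v = v 0 • e0 := by
  ext k
  rw [rowOp_apply, rowMul_Xmat_eq_sum, sum_eq_single 0]
  · by_cases hk : k = 0 <;> simp [Xmat, X2, e0, hk]
  · intro i _ hi
    simp [Xmat, X2, hi]
  · simp

theorem W_one : W 1 = e0 := by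
  ext i
  rcases i with _ | i <;> simp [W, e0]

theorem rowOp_zero_W {x : ℝ} (hx : x ≠ 0) : rowOp 0 (W x) = x⁻¹ • W x := by
  ext k
  rw [rowOp_zero_apply, Pi.smul_apply, smul_eq_mul, W, W, pow_succ]
  field_simp
  ring

theorem rowOp_zero_rowOp_one (v : ℕ → ℝ) : rowOp 0 (rowOp 1 v) = rowOp 0 v + rowOp 1 v := by
  ext k
  rcases k with _ | k <;>
    simp only [rowOp_zero_apply, rowOp_one_apply_zero, rowOp_one_apply_succ, Pi.add_apply] <;>
    ring

theorem rowOp_one_pow_apply_zero (v : ℕ → ℝ) (k : ℕ) : (rowOp 1 ^ k) v 0 = v 0 := by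
  induction k with
  | zero => rfl
  | succ k ih => rw [pow_succ', Module.End.mul_apply, rowOp_one_apply_zero, ih]

def transfer : Module.End ℝ (ℕ → ℝ) := rowOp 0 + rowOp 1

theorem transfer_apply (v : ℕ → ℝ) : transfer v = rowOp 0 v + rowOp 1 v := rfl

theorem transfer_rowOp_one (v : ℕ → ℝ) :
    transfer (rowOp 1 v) = transfer v + rowOp 1 (rowOp 1 v) := by
  rw [transfer_apply, transfer_apply, rowOp_zero_rowOp_one]

theorem transfer_W {x : ℝ} (hx : x ≠ 0) : transfer (W x) = x⁻¹ • W x + rowOp 1 (W x) := by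
  rw [transfer_apply, rowOp_zero_W hx]

theorem transfer_pow_rowOp_one_pow_W {x : ℝ} (hx : x ≠ 0) (m k : ℕ) :
    (transfer ^ m) ((rowOp 1 ^ k) (W x)) 0 = ballotPoly m k x⁻¹ := by
  induction m generalizing k with
  | zero => simp [rowOp_one_pow_apply_zero, ballotPoly, W]
  | succ m ih =>
    induction k with
    | zero =>
      have h0 := ih 0
      have h1 := ih 1
      rw [pow_zero, Module.End.one_apply] at h0 ⊢
      rw [pow_one] at h1
      rw [pow_succ, Module.End.mul_apply, transfer_W hx, map_add, map_smul, Pi.add_apply,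
        Pi.smul_apply, smul_eq_mul, h0, h1, ballotPoly_succ_zero]
    | succ k ihk =>
      have hT : transfer ((rowOp 1 ^ (k + 1)) (W x)) =
          transfer ((rowOp 1 ^ k) (W x)) + (rowOp 1 ^ (k + 2)) (W x) := by
        rw [pow_succ', Module.End.mul_apply, transfer_rowOp_one, pow_succ' _ (k + 1), pow_succ' _ k,
          Module.End.mul_apply, Module.End.mul_apply]
      rw [pow_succ, Module.End.mul_apply, hT, map_add, Pi.add_apply,
        ← Module.End.mul_apply (transfer ^ m), ← pow_succ, ihk, ih, ballotPoly_succ_succ]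

theorem transfer_pow_e0 (m : ℕ) : (transfer ^ m) e0 0 = ballot m 1 := by
  have := transfer_pow_rowOp_one_pow_W one_ne_zero m 0
  rwa [pow_zero, Module.End.one_apply, W_one, inv_one, ballotPoly_one] at this

def VanishesFrom (N : ℕ) (v : ℕ → ℝ) : Prop := ∀ i, N ≤ i → v i = 0

theorem VanishesFrom.mono {N M : ℕ} {v : ℕ → ℝ} (h : VanishesFrom N v) (hNM : N ≤ M) :
    VanishesFrom M v :=
  fun i hi => h i (hNM.trans hi)

theorem VanishesFrom.tsum_mul_eq_sum {N : ℕ} {u : ℕ → ℝ} (h : VanishesFrom N u) (v : ℕ → ℝ) :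
    ∑' i, u i * v i = ∑ i ∈ range N, u i * v i :=
  tsum_eq_sum fun i hi => by rw [h i (by simpa using hi), zero_mul]

theorem vanishesFrom_e0 : VanishesFrom 1 e0 := fun i hi => by
  simp [e0, Nat.one_le_iff_ne_zero.mp hi]

theorem VanishesFrom.rowOp {N : ℕ} {v : ℕ → ℝ} (h : VanishesFrom N v) (a : Fin 3) :
    VanishesFrom (N + 1) (rowOp a v) := fun k hk => by
  rw [rowOp_apply, rowMul_Xmat_eq_sum]
  refine sum_eq_zero fun i _ => ?_
  rcases lt_or_ge i N with hi | hi
  · rw [Xmat_eq_zero_of_far a (.inr (by omega)), mul_zero]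
  · rw [h i hi, zero_mul]

theorem VanishesFrom.transfer {N : ℕ} {v : ℕ → ℝ} (h : VanishesFrom N v) :
    VanishesFrom (N + 1) (transfer v) := fun i hi => by
  rw [transfer_apply, Pi.add_apply, h.rowOp 0 i hi, h.rowOp 1 i hi, add_zero]

theorem VanishesFrom.rowWord {N : ℕ} {v : ℕ → ℝ} (h : VanishesFrom N v) (w : List (Fin 3)) :
    VanishesFrom (N + w.length) (rowWord v w) := by
  induction w generalizing N v with
  | nil => exact h
  | cons a w ih =>
    rw [List.length_cons, add_comm w.length, ← add_assoc]
    exact ih (h.rowOp a)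

-- The symmetry of `X₀ + X₁`, for partial sums.
theorem sum_range_transfer_mul (u v : ℕ → ℝ) (N : ℕ) :
    ∑ i ∈ range (N + 1), transfer u i * v i =
      ∑ i ∈ range (N + 1), u i * transfer v i + (u (N + 1) * v N - u N * v (N + 1)) := by
  induction N with
  | zero =>
    simp [transfer_apply, rowOp_zero_apply, rowOp_one_apply_zero]
    ring
  | succ N ih =>
    rw [sum_range_succ, ih, sum_range_succ _ (N + 1)]
    simp only [transfer_apply, Pi.add_apply, rowOp_zero_apply, rowOp_one_apply_succ]
    ring

theorem tsum_transfer_pow_mul {N : ℕ} {u : ℕ → ℝ} (hu : VanishesFrom N u) (v : ℕ → ℝ)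
    (m : ℕ) : ∑' i, (transfer ^ m) u i * v i = ∑' i, u i * (transfer ^ m) v i := by
  induction m generalizing N u with
  | zero => rfl
  | succ m ih =>
    rw [pow_succ, Module.End.mul_apply, ih hu.transfer, ← pow_succ, pow_succ', Module.End.mul_apply,
      hu.transfer.tsum_mul_eq_sum, (hu.mono N.le_succ).tsum_mul_eq_sum, sum_range_transfer_mul,
      hu N le_rfl, hu (N + 1) N.le_succ]
    simp

/-! ### Cutting configurations at the first second class particle -/

theorem numTwos_cons {ℓ : ℕ} (a : Fin 3) (τ : Fin ℓ → Fin 3) :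
    numTwos (Fin.cons a τ : Fin (ℓ + 1) → Fin 3) = numTwos τ + if a = 2 then 1 else 0 := by
  rw [numTwos, numTwos, card_filter, card_filter, Fin.sum_univ_succ, add_comm]
  simp only [Fin.cons_zero, Fin.cons_succ]

theorem sum_Y_succ {M : Type*} [AddCommMonoid M] {ℓ : ℕ} (g : (Fin (ℓ + 1) → Fin 3) → M)
    (n : ℕ) :
    ∑ τ ∈ Y (ℓ + 1) n, g τ =
      ∑ τ ∈ Y ℓ n, (g (Fin.cons 0 τ) + g (Fin.cons 1 τ)) +
        ∑ τ ∈ univ.filter (fun τ : Fin ℓ → Fin 3 => numTwos τ + 1 = n), g (Fin.cons 2 τ) := by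
  rw [Y, sum_filter, ← (Fin.consEquiv fun _ => Fin 3).sum_comp, Fintype.sum_prod_type,
    Fin.sum_univ_three, Y, sum_filter, sum_filter, ← sum_add_distrib]
  congr 1 <;> refine sum_congr rfl fun τ _ => ?_ <;>
    simp only [Fin.consEquiv, Equiv.coe_fn_mk, numTwos_cons] <;> split_ifs <;> simp_all

theorem Y_eq_empty_of_lt {ℓ n : ℕ} (h : ℓ < n) : Y ℓ n = ∅ := by
  refine filter_false_of_mem fun τ _ hτ => ?_
  have : numTwos τ ≤ ℓ := (card_filter_le _ _).trans (by simp)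
  omega

theorem rowWord_smul (c : ℝ) (v : ℕ → ℝ) (w : List (Fin 3)) :
    rowWord (c • v) w = c • rowWord v w := by
  induction w generalizing v with
  | nil => rfl
  | cons a w ih => exact (congrArg (rowWord · w) (map_smul (rowOp a) c v)).trans (ih _)

theorem pairing_smul (c : ℝ) (v : ℕ → ℝ) (w : List (Fin 3)) (u : ℕ → ℝ) :
    pairing (c • v) w u = c * pairing v w u := by
  simp only [pairing, rowWord_smul, Pi.smul_apply, smul_eq_mul, mul_assoc, tsum_mul_left]

def Zvec (v : ℕ → ℝ) (β : ℝ) (L n : ℕ) : ℝ :=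
  ∑ τ ∈ Y L n, pairing v (List.ofFn τ) (V β)

theorem Z_eq_Zvec (α β : ℝ) (L n : ℕ) : Z α β L n = Zvec (W α) β L n := rfl

theorem rowWord_ofFn_cons {ℓ : ℕ} (v : ℕ → ℝ) (a : Fin 3) (τ : Fin ℓ → Fin 3) :
    rowWord v (List.ofFn (Fin.cons a τ : Fin (ℓ + 1) → Fin 3)) =
      rowWord (rowOp a v) (List.ofFn τ) := by
  rw [List.ofFn_cons]
  rfl

theorem pairing_cons {ℓ : ℕ} (v : ℕ → ℝ) (a : Fin 3) (τ : Fin ℓ → Fin 3) (w : ℕ → ℝ) :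
    pairing v (List.ofFn (Fin.cons a τ : Fin (ℓ + 1) → Fin 3)) w =
      pairing (rowOp a v) (List.ofFn τ) w := by
  rw [pairing, rowWord_ofFn_cons]
  rfl

theorem Zvec_succ_succ (v : ℕ → ℝ) (β : ℝ) (ℓ n : ℕ) :
    Zvec v β (ℓ + 1) (n + 1) =
      Zvec (rowOp 0 v) β ℓ (n + 1) + Zvec (rowOp 1 v) β ℓ (n + 1) + v 0 * Zvec e0 β ℓ n := by
  rw [Zvec, sum_Y_succ, sum_add_distrib, Zvec, Zvec, Zvec, mul_sum]
  have hY : univ.filter (fun τ : Fin ℓ → Fin 3 => numTwos τ + 1 = n + 1) = Y ℓ n := by simp [Y]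
  simp only [pairing_cons, rowOp_two, pairing_smul, hY]

theorem sum_Y_zero_rowWord_eq_transfer_pow (v : ℕ → ℝ) (ℓ : ℕ) :
    ∑ τ ∈ Y ℓ 0, rowWord v (List.ofFn τ) = (transfer ^ ℓ) v := by
  induction ℓ generalizing v with
  | zero =>
    rw [Y, filter_true_of_mem (fun τ _ => by simp [numTwos]), univ_unique, sum_singleton]
    rfl
  | succ ℓ ih =>
    rw [sum_Y_succ, filter_false_of_mem (by simp), sum_empty, add_zero]
    simp only [rowWord_ofFn_cons, sum_add_distrib, ih]
    rw [pow_succ, Module.End.mul_apply, transfer_apply, map_add]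

theorem Zvec_zero_eq_tsum {N : ℕ} {v : ℕ → ℝ} (hv : VanishesFrom N v) (β : ℝ) (ℓ : ℕ) :
    Zvec v β ℓ 0 = ∑' i, (transfer ^ ℓ) v i * V β i := by
  have hsum : ∀ τ ∈ Y ℓ 0, Summable fun i => rowWord v (List.ofFn τ) i * V β i := fun τ _ =>
    summable_of_ne_finset_zero (s := range (N + ℓ)) fun i hi => by
      rw [(hv.rowWord _) i (by simpa using hi), zero_mul]
  rw [Zvec, ← sum_Y_zero_rowWord_eq_transfer_pow]
  simp only [pairing, Finset.sum_apply, sum_mul]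
  exact (Summable.tsum_finsetSum hsum).symm

theorem transfer_pow_W {x : ℝ} (hx : x ≠ 0) (m : ℕ) : (transfer ^ m) (W x) 0 = ballotPoly m 0 x⁻¹ :=
  transfer_pow_rowOp_one_pow_W hx m 0

theorem Zvec_e0_zero {β : ℝ} (hβ : β ≠ 0) (f : ℕ) : Zvec e0 β f 0 = ballotPoly f 0 β⁻¹ := by
  rw [Zvec_zero_eq_tsum vanishesFrom_e0, tsum_transfer_pow_mul vanishesFrom_e0,
    vanishesFrom_e0.tsum_mul_eq_sum, sum_range_one, e0, Pi.single_eq_same, one_mul]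
  -- `V β` and `W β` are the same vector.
  exact transfer_pow_W hβ f

theorem Zvec_eq_sum_antidiagonal (v : ℕ → ℝ) (β : ℝ) (f n : ℕ) :
    Zvec v β (f + n + 1) (n + 1) =
      ∑ p ∈ antidiagonal f, (transfer ^ p.1) v 0 * Zvec e0 β (p.2 + n) n := by
  induction f generalizing v with
  | zero =>
    rw [Zvec_succ_succ, Zvec, Zvec, Y_eq_empty_of_lt (by omega)]
    simp
  | succ f ih =>
    rw [show f + 1 + n + 1 = f + n + 1 + 1 by ring, Zvec_succ_succ, ih, ih,
      Nat.sum_antidiagonal_succ, ← sum_add_distrib]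
    simp only [pow_succ, Module.End.mul_apply, transfer_apply, map_add, Pi.add_apply, add_mul]
    rw [pow_zero, Module.End.one_apply, add_right_comm f 1 n, add_comm]

theorem Zvec_e0_add {β : ℝ} (hβ : β ≠ 0) (f n : ℕ) :
    Zvec e0 β (f + n) n = ballotPoly f (2 * n) β⁻¹ := by
  induction n generalizing f with
  | zero => exact Zvec_e0_zero hβ f
  | succ n ih =>
    have hx0 : ∀ k : ℕ, ∑ t ∈ antidiagonal k, (0 : ℝ) ^ t.1 * β⁻¹ ^ t.2 = β⁻¹ ^ k := fun k => by
      rw [Nat.sum_antidiagonal_eq_sum_range_succ (fun i j => (0 : ℝ) ^ i * β⁻¹ ^ j),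
        sum_range_succ', sum_eq_zero fun i _ => by simp]
      simp
    rw [← add_assoc, Zvec_eq_sum_antidiagonal]
    -- `⟨e₀|T^p|e₀⟩ = ballot p 1` is the `y = 0` value of `ballotPoly p 1 y`.
    simp only [transfer_pow_e0, ih, ← ballotPoly_zero]
    rw [sum_antidiagonal_ballotPoly_mul, ballotPoly]
    refine sum_congr rfl fun q _ => ?_
    rw [hx0, show 1 + 2 * n + 1 + q.2 = 2 * (n + 1) + q.2 by ring]

theorem Z_eq_sum_antidiagonal {α β : ℝ} (hα : α ≠ 0) (hβ : β ≠ 0) (f n : ℕ) :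
    Z α β (f + n + 1) (n + 1) =
      ∑ q ∈ antidiagonal f,
        (ballot q.1 (2 * n + 1 + q.2) : ℝ) * ∑ t ∈ antidiagonal q.2, α⁻¹ ^ t.1 * β⁻¹ ^ t.2 := by
  rw [Z_eq_Zvec, Zvec_eq_sum_antidiagonal]
  simp only [transfer_pow_W hα, Zvec_e0_add hβ]
  rw [sum_antidiagonal_ballotPoly_mul]
  simp only [zero_add]

theorem sum_antidiagonal_inv_pow_mul_inv_pow {α β : ℝ} (hα : α ≠ 0) (hβ : β ≠ 0) (hαβ : α ≠ β)
    (k : ℕ) :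
    ∑ t ∈ antidiagonal k, α⁻¹ ^ t.1 * β⁻¹ ^ t.2 =
      α * β / (α - β) * ((β ^ (k + 1))⁻¹ - (α ^ (k + 1))⁻¹) := by
  have hsub : α⁻¹ - β⁻¹ ≠ 0 := by rwa [sub_ne_zero, ne_eq, inv_inj]
  have hgeom := geom_sum₂_mul α⁻¹ β⁻¹ (k + 1)
  rw [Nat.add_sub_cancel] at hgeom
  rw [Nat.sum_antidiagonal_eq_sum_range_succ (fun i j => α⁻¹ ^ i * β⁻¹ ^ j)]
  apply mul_right_cancel₀ hsub
  rw [hgeom, inv_pow, inv_pow]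
  have : α - β ≠ 0 := sub_ne_zero.mpr hαβ
  field_simp
  ring

theorem R_eq_sum_antidiagonal (f n : ℕ) (x : ℝ) :
    R (f + n + 1) (n + 1) x =
      ∑ q ∈ antidiagonal f, (ballot q.1 (2 * n + 1 + q.2) : ℝ) * (x ^ (q.2 + 1))⁻¹ := by
  rw [← Nat.sum_antidiagonal_swap, Nat.sum_antidiagonal_eq_sum_range_succ_mk, R,
    show f + n + 1 - (n + 1) = f by omega]
  refine sum_congr rfl fun k hk => ?_
  rw [mem_range] at hk
  rw [Prod.swap_prod_mk, ballot_eq_catC,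
    show f - k + (2 * n + 1 + k) = f + n + 1 + (n + 1) - 1 by omega]

/-- the partition function decomposes as
`Z^{α,β}(L,n) = (αβ/(α−β)) (R(L,n,β) − R(L,n,α))` for `0 < n < L`, `α ≠ β`. -/
theorem Z_decomposition (α β : ℝ)
    (hα : α ∈ Set.Ioc (0 : ℝ) 1) (hβ : β ∈ Set.Ioc (0 : ℝ) 1) (hαβ : α ≠ β)
    (L n : ℕ) (h0n : 0 < n) (hnL : n < L) :
    Z α β L n = (α * β / (α - β)) * (R L n β - R L n α) := by
  obtain ⟨n, rfl⟩ := Nat.exists_eq_add_of_le' h0n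
  obtain ⟨f, rfl⟩ := Nat.exists_eq_add_of_le' hnL.le
  have hα0 : α ≠ 0 := hα.1.ne'
  have hβ0 : β ≠ 0 := hβ.1.ne'
  rw [← add_assoc, Z_eq_sum_antidiagonal hα0 hβ0, R_eq_sum_antidiagonal, R_eq_sum_antidiagonal,
    ← sum_sub_distrib, mul_sum]
  refine sum_congr rfl fun q _ => ?_
  rw [sum_antidiagonal_inv_pow_mul_inv_pow hα0 hβ0 hαβ, ← mul_sub]
  ring

end TASEP
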